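/- arXiv:2210.16211 — 3 statements merged into one kernel-verified Lean document; each statement's English description precedes it below -/
import Mathlib

section
/- For n = qk with q, k ≥ 2, fix q elements x_1,...,x_q of [n], fix a partition of [n]\{x_1,...,x_q} into q sets C_1,...,C_q of size k−1, let B_i = C_i ∪ {x_i}, and let F = {B_1,...,B_q} ∪ C([n]\{x_1,...,x_q}, k). Then F is non-trivial, union-q-efficient, and |F| = C(n−q,k) + q. -/
/-- For `n = qk` with `q, k ≥ 2`: fix `q` elements `x 1, ..., x q` of `[n]` and a
partition of the remaining `n - q` elements into sets `C i` of size `k-1`; let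
`B i = C i ∪ {x i}` and `F = {B 1, ..., B q} ∪ C([n] \ {x 1,...,x q}, k)`. Then
`F` is non-trivial, union-`q`-efficient, and `|F| = C(n-q,k) + q`. -/
theorem stmt16 (q k n : ℕ) (hq : 2 ≤ q) (hk : 2 ≤ k) (hn : n = q * k)
    (x : Fin q ↪ Fin n) (C : Fin q → Finset (Fin n))
    (hCcard : ∀ i, (C i).card = k - 1)
    (hCdisj : ∀ i j, i ≠ j → Disjoint (C i) (C j))
    (hCpart : Finset.univ.biUnion C = (Finset.univ.image x)ᶜ)
    (F : Finset (Finset (Fin n)))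
    (hFdef : F = Finset.univ.image (fun i => insert (x i) (C i)) ∪
      Finset.powersetCard k (Finset.univ.image x)ᶜ) :
    F.sup id = Finset.univ ∧
    (∀ F' ⊆ F, F'.sup id = Finset.univ →
      ∃ G ⊆ F', G.card = q ∧ G.sup id = Finset.univ) ∧
    F.card = (n - q).choose k + q := by
  set B : Fin q → Finset (Fin n) := fun i => insert (x i) (C i) with hB
  have hxmem : ∀ i, x i ∈ Finset.univ.image x :=
    fun i => Finset.mem_image_of_mem x (Finset.mem_univ i)
  have hCsub : ∀ i, C i ⊆ (Finset.univ.image x)ᶜ := by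
    intro i a ha
    rw [← hCpart]
    exact Finset.mem_biUnion.2 ⟨i, Finset.mem_univ i, ha⟩
  have hBinj : Function.Injective B := by
    intro i j hij
    have hx : x i ∈ B j := hij ▸ Finset.mem_insert_self _ _
    rcases Finset.mem_insert.1 hx with h | h
    · exact x.injective h
    · exact absurd (hxmem i) (Finset.mem_compl.1 (hCsub j h))
  have hBF : Finset.univ.image B ⊆ F := by
    rw [hFdef]; exact Finset.subset_union_left
  have hsupB : (Finset.univ.image B).sup id = Finset.univ := by
    apply Finset.eq_univ_of_forall
    intro a
    rw [Finset.sup_image]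
    by_cases ha : a ∈ Finset.univ.image x
    · obtain ⟨i, _, rfl⟩ := Finset.mem_image.1 ha
      exact Finset.le_sup (f := id ∘ B) (Finset.mem_univ i) (Finset.mem_insert_self _ _)
    · have : a ∈ Finset.univ.biUnion C := hCpart ▸ Finset.mem_compl.2 ha
      obtain ⟨i, _, hi⟩ := Finset.mem_biUnion.1 this
      exact Finset.le_sup (f := id ∘ B) (Finset.mem_univ i) (Finset.mem_insert_of_mem hi)
  have hcardB : (Finset.univ.image B).card = q := by
    rw [Finset.card_image_of_injective _ hBinj, Finset.card_univ, Fintype.card_fin]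
  refine ⟨?_, ?_, ?_⟩
  · apply le_antisymm (Finset.sup_le fun S _ => Finset.subset_univ S)
    calc Finset.univ = (Finset.univ.image B).sup id := hsupB.symm
      _ ≤ F.sup id := Finset.sup_mono hBF
  · intro F' hF' hsup
    have hBmem : ∀ i, B i ∈ F' := by
      intro i
      have hx : x i ∈ F'.sup id := hsup ▸ Finset.mem_univ _
      rw [Finset.mem_sup] at hx
      obtain ⟨S, hS, hxS⟩ := hx
      have hSF : S ∈ F := hF' hS
      rw [hFdef, Finset.mem_union] at hSF
      rcases hSF with h | h
      · obtain ⟨j, _, rfl⟩ := Finset.mem_image.1 h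
        rcases Finset.mem_insert.1 hxS with h' | h'
        · cases x.injective h'
          exact hS
        · exact absurd (hxmem i) (Finset.mem_compl.1 (hCsub j h'))
      · exact absurd (hxmem i)
          (Finset.mem_compl.1 ((Finset.mem_powersetCard.1 h).1 hxS))
    refine ⟨Finset.univ.image B, ?_, hcardB, hsupB⟩
    intro S hS
    obtain ⟨i, _, rfl⟩ := Finset.mem_image.1 hS
    exact hBmem i
  · have hdisj : Disjoint (Finset.univ.image B)
        (Finset.powersetCard k (Finset.univ.image x)ᶜ) := by
      rw [Finset.disjoint_left]
      intro S hS hS'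
      obtain ⟨i, _, rfl⟩ := Finset.mem_image.1 hS
      exact absurd (hxmem i)
        (Finset.mem_compl.1 ((Finset.mem_powersetCard.1 hS').1 (Finset.mem_insert_self _ _)))
    have hcardc : ((Finset.univ.image x)ᶜ : Finset (Fin n)).card = n - q := by
      rw [Finset.card_compl, Finset.card_image_of_injective _ x.injective,
        Finset.card_univ, Fintype.card_fin, Fintype.card_fin]
    rw [hFdef, Finset.card_union_of_disjoint hdisj, hcardB,
      Finset.card_powersetCard, hcardc, Nat.add_comm]
end

section
/- For n = 2q ≥ 10, the family F of complements of the edge set of the graph K_{n−4} with four pendant vertices attached to a single vertex of K_{n−4} — equivalently, the family F ⊆ C([n], n−2) of complements of its edges — contains no q-simplex and has size C(n−4,2) + 4 > C(q+1,2). -/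
/-!
The edges of the graph are the pairs inside the clique `K = Pᶜ` together with the pendant edges
`{c, p}`, `p ∈ P`. An edge family covering every vertex must contain all pendant edges, since
`{c, p}` is the only edge at `p`. The remaining edges have to cover the `#K - 1` clique
vertices other than `c`, two at a time, so a cover has at least `#P + (#K - 1) / 2` edges.
For `#P = 4` and `#K = 2q - 4` this exceeds `q + 1`, so already `q + 1` of the complements
have nonempty intersection.
-/

open Finset

namespace Finset

variable {α : Type*} [DecidableEq α]

theorem pair_right_injective (c : α) : Function.Injective fun p : α => ({c, p} : Finset α) := by
  intro a b (hab : ({c, a} : Finset α) = {c, b})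
  have hb : b ∈ ({c, a} : Finset α) := hab ▸ mem_insert_of_mem (mem_singleton_self b)
  have ha : a ∈ ({c, b} : Finset α) := hab ▸ mem_insert_of_mem (mem_singleton_self a)
  simp only [mem_insert, mem_singleton] at ha hb
  rcases ha with rfl | rfl
  · rcases hb with rfl | rfl <;> rfl
  · rfl

end Finset

section PendantClique

variable {α : Type*} [DecidableEq α]

def pendantEdges (P : Finset α) (c : α) : Finset (Finset α) :=
  P.image fun p => {c, p}

theorem card_pendantEdges (P : Finset α) (c : α) : #(pendantEdges P c) = #P :=
  card_image_of_injective _ (pair_right_injective c)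

variable [Fintype α]

def pendantCliqueEdges (P : Finset α) (c : α) : Finset (Finset α) :=
  Pᶜ.powersetCard 2 ∪ pendantEdges P c

theorem disjoint_powersetCard_compl_pendantEdges (P : Finset α) (c : α) :
    Disjoint (Pᶜ.powersetCard 2) (pendantEdges P c) := by
  simp only [disjoint_left, mem_powersetCard, pendantEdges, mem_image]
  rintro _ ⟨hsub, -⟩ ⟨p, hp, rfl⟩
  exact mem_compl.mp (hsub (mem_insert_of_mem (mem_singleton_self p))) hp

theorem card_pendantCliqueEdges (P : Finset α) (c : α) :
    #(pendantCliqueEdges P c) = (#Pᶜ).choose 2 + #P := by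
  rw [pendantCliqueEdges, card_union_of_disjoint (disjoint_powersetCard_compl_pendantEdges P c),
    card_powersetCard, card_pendantEdges]

variable {P : Finset α} {c : α} {S : Finset (Finset α)}

theorem pendantEdges_subset_of_sup_eq_univ (hc : c ∉ P) (hS : S ⊆ pendantCliqueEdges P c)
    (hcov : S.sup id = univ) : pendantEdges P c ⊆ S := by
  simp only [pendantEdges, image_subset_iff]
  intro p hp
  obtain ⟨e, he, hpe⟩ := mem_sup.mp (hcov ▸ mem_univ p)
  rcases mem_union.mp (hS he) with hK | hpend
  · exact absurd hp (mem_compl.mp ((mem_powersetCard.mp hK).1 hpe))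
  · obtain ⟨p', -, rfl⟩ := mem_image.mp hpend
    rcases mem_insert.mp hpe with hpc | hpp'
    · exact absurd (hpc ▸ hp) hc
    · rwa [mem_singleton.mp hpp']

theorem card_compl_add_two_mul_card_le (hc : c ∉ P) (hS : S ⊆ pendantCliqueEdges P c)
    (hcov : S.sup id = univ) : #Pᶜ + 2 * #P ≤ 2 * #S + 1 := by
  have hpend := pendantEdges_subset_of_sup_eq_univ hc hS hcov
  have hcover : Pᶜ.erase c ⊆ (S \ pendantEdges P c).biUnion id := by
    intro x hx
    obtain ⟨hxc, hxP⟩ := mem_erase.mp hx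
    obtain ⟨e, he, hxe⟩ := mem_sup.mp (hcov ▸ mem_univ x)
    refine mem_biUnion.mpr ⟨e, mem_sdiff.mpr ⟨he, ?_⟩, hxe⟩
    intro hxpend
    obtain ⟨p, hp, rfl⟩ := mem_image.mp hxpend
    rcases mem_insert.mp hxe with rfl | hxp
    · exact hxc rfl
    · exact mem_compl.mp hxP (mem_singleton.mp hxp ▸ hp)
  have hedge : ∀ e ∈ S \ pendantEdges P c, #(id e) ≤ 2 := by
    intro e he
    rcases mem_union.mp (hS (mem_sdiff.mp he).1) with hK | hpe
    · exact (mem_powersetCard.mp hK).2.le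
    · exact absurd hpe (mem_sdiff.mp he).2
  have hbound := (card_le_card hcover).trans (card_biUnion_le_card_mul _ _ 2 hedge)
  rw [card_sdiff_of_subset hpend, card_pendantEdges] at hbound
  have hle := card_le_card hpend
  rw [card_pendantEdges] at hle
  have := pred_card_le_card_erase (s := Pᶜ) (a := c)
  omega

end PendantClique

theorem sup_image_compl_eq_univ {α : Type*} [Fintype α] [DecidableEq α]
    {S : Finset (Finset α)} (h : S.inf id = ∅) : (S.image compl).sup id = univ := by
  rw [sup_image, ← compl_compl (S.sup _), Finset.compl_sup]
  simp only [Function.comp_apply, id_eq, compl_compl]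
  rw [show (S.inf fun B => B) = S.inf id from rfl, h, compl_empty]

theorem filter_eq_pendantCliqueEdges (n : ℕ) (hn : 5 ≤ n) :
    univ.filter (fun A : Finset (Fin n) =>
      ∃ i j : Fin n, i ≠ j ∧
        ((i.val < n - 4 ∧ j.val < n - 4) ∨
         (i.val = 0 ∧ n - 4 ≤ j.val) ∨
         (j.val = 0 ∧ n - 4 ≤ i.val)) ∧
        A = {i, j}) = pendantCliqueEdges (Ici ⟨n - 4, by omega⟩) ⟨0, by omega⟩ := by
  ext A
  simp only [mem_filter, mem_univ, true_and, pendantCliqueEdges, pendantEdges, mem_union,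
    mem_powersetCard, mem_image, mem_Ici, card_eq_two, subset_iff, mem_compl, Fin.le_def, not_le]
  constructor
  · rintro ⟨i, j, hij, (⟨hi, hj⟩ | ⟨hi0, hj⟩ | ⟨hj0, hi⟩), rfl⟩
    · left
      refine ⟨?_, i, j, hij, rfl⟩
      intro x hx
      rcases mem_insert.mp hx with rfl | hx
      · exact hi
      · rw [mem_singleton.mp hx]; exact hj
    · right
      exact ⟨j, hj, by rw [show i = ⟨0, by omega⟩ from Fin.ext hi0]⟩
    · right
      exact ⟨i, hi, by rw [show j = ⟨0, by omega⟩ from Fin.ext hj0, pair_comm]⟩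
  · rintro (⟨hsub, i, j, hij, rfl⟩ | ⟨p, hp, rfl⟩)
    · exact ⟨i, j, hij, Or.inl ⟨hsub (mem_insert_self i _),
        hsub (mem_insert_of_mem (mem_singleton_self j))⟩, rfl⟩
    · refine ⟨_, p, ?_, Or.inr (Or.inl ⟨rfl, hp⟩), rfl⟩
      rw [ne_eq, Fin.ext_iff]
      simp only
      omega

/-- For `n = 2q ≥ 10`: let `G` be the graph `K_{n-4}` (on the vertices of value
`< n-4`) with four extra vertices all attached to the vertex `0` of the clique,
let `E` be its edge set (as 2-element subsets of `[n]`) and `F` the family of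
complements of the edges. Then `F` contains no `q`-simplex and has size
`C(n-4,2) + 4 > C(q+1,2)`. -/
theorem stmt17 (q n : ℕ) (hq : 5 ≤ q) (hn : n = 2 * q)
    (E : Finset (Finset (Fin n)))
    (hE : E = Finset.univ.filter (fun A : Finset (Fin n) =>
      ∃ i j : Fin n, i ≠ j ∧
        ((i.val < n - 4 ∧ j.val < n - 4) ∨
         (i.val = 0 ∧ n - 4 ≤ j.val) ∨
         (j.val = 0 ∧ n - 4 ≤ i.val)) ∧
        A = {i, j}))
    (F : Finset (Finset (Fin n))) (hF : F = E.image (fun A => Aᶜ)) :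
    (¬ ∃ S ⊆ F, S.card = q + 1 ∧ S.inf id = ∅ ∧
        ∀ T ⊆ S, T.card = q → (T.inf id).Nonempty) ∧
    F.card = (n - 4).choose 2 + 4 ∧
    (q + 1).choose 2 < (n - 4).choose 2 + 4 := by
  have hn5 : 5 ≤ n := by omega
  set P : Finset (Fin n) := Ici ⟨n - 4, by omega⟩
  have hP : #P = 4 := by rw [Fin.card_Ici, Fin.val_mk]; omega
  have hPc : #Pᶜ = n - 4 := by rw [card_compl, Fintype.card_fin, hP]
  have h0P : (⟨0, by omega⟩ : Fin n) ∉ P := by rw [mem_Ici, Fin.mk_le_mk]; omega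
  rw [filter_eq_pendantCliqueEdges n hn5] at hE
  subst hE hF
  refine ⟨?_, ?_, ?_⟩
  · rintro ⟨S, hSF, hS, hinf, -⟩
    have hSE : S.image compl ⊆ pendantCliqueEdges P ⟨0, by omega⟩ := by
      intro B hB
      obtain ⟨A, hA, rfl⟩ := mem_image.mp hB
      obtain ⟨e, he, rfl⟩ := mem_image.mp (hSF hA)
      rwa [compl_compl]
    have hcard := card_compl_add_two_mul_card_le h0P hSE (sup_image_compl_eq_univ hinf)
    rw [card_image_of_injective _ compl_injective] at hcard
    omega
  · rw [card_image_of_injective _ compl_injective, card_pendantCliqueEdges, hP, hPc]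
  · have := Nat.choose_le_choose 2 (show q + 1 ≤ n - 4 by omega)
    omega
end

section
/- Let q ≥ 3, n = 2q. In any connected graph G on n vertices such that every edge-subset of E(G) covering all vertices contains a perfect matching, for every perfect matching M of G and every edge u v ∈ M, one of u, v has degree 1 in G. -/
/-!
Suppose `uv ∈ M` with neither `u` nor `v` a leaf. Rerouting a matching edge `ab` to two edges
`ac`, `bd` gives an edge cover in which `a` and the partner `t` of `c` each lie on a single edge,
so a perfect matching inside it would contain both `ac` and `tc`. Hence `N(b) ⊆ {a, t}` when
`t ∉ {a, b}` and `a ~ c`. Taking a neighbour `z ≠ u` of `v` with partner `x`, four instances of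
this show that `{u, v, x, z}` is closed under adjacency, so by connectivity it is all of `G`,
contradicting `n ≥ 6`.
-/

variable {V : Type*}

def IsEdgeCover (E : Finset (Sym2 V)) : Prop := ∀ v, ∃ e ∈ E, v ∈ e

def IsPerfectMatching (M : Finset (Sym2 V)) : Prop := ∀ v, ∃! e, e ∈ M ∧ v ∈ e

namespace IsPerfectMatching

variable {M : Finset (Sym2 V)}

theorem eq_of_mem_of_mem (hM : IsPerfectMatching M) {v : V} {e f : Sym2 V}
    (he : e ∈ M) (hf : f ∈ M) (hve : v ∈ e) (hvf : v ∈ f) : e = f :=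
  (hM v).unique ⟨he, hve⟩ ⟨hf, hvf⟩

theorem exists_mem (hM : IsPerfectMatching M) (v : V) : ∃ w, s(v, w) ∈ M := by
  obtain ⟨e, ⟨he, hve⟩, -⟩ := hM v
  obtain ⟨w, rfl⟩ := Sym2.mem_iff_exists.mp hve
  exact ⟨w, he⟩

theorem notMem_of_notMem_partner (hM : IsPerfectMatching M) {e : Sym2 V} {v w : V}
    (he : e ∈ M) (hvw : s(v, w) ∈ M) (hv : v ∉ e) : w ∉ e := fun hw ↦
  hv (hM.eq_of_mem_of_mem hvw he (Sym2.mem_mk_right v w) hw ▸ Sym2.mem_mk_left v w)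

theorem mem_of_forall_eq {E : Finset (Sym2 V)} (hM : IsPerfectMatching M) (hME : M ⊆ E)
    {v : V} {e : Sym2 V} (hE : ∀ f ∈ E, v ∈ f → f = e) : e ∈ M := by
  obtain ⟨f, ⟨hfM, hvf⟩, -⟩ := hM v
  rwa [← hE f (hME hfM) hvf]

variable [DecidableEq V]

theorem isEdgeCover_reroute (hM : IsPerfectMatching M) (a b c d : V) :
    IsEdgeCover (insert s(a, c) (insert s(b, d) (M.erase s(a, b)))) := by
  intro w
  obtain ⟨e, ⟨heM, hwe⟩, -⟩ := hM w
  by_cases hab : e = s(a, b)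
  · subst hab
    rcases Sym2.mem_iff.mp hwe with rfl | rfl
    · exact ⟨s(w, c), by simp, by simp⟩
    · exact ⟨s(w, d), by simp, by simp⟩
  · exact ⟨e, by simp [hab, heM], hwe⟩

end IsPerfectMatching

namespace SimpleGraph

variable (G : SimpleGraph V)

def EdgeCoversHavePerfectMatchings [Fintype G.edgeSet] : Prop :=
  ∀ E' ⊆ G.edgeFinset, IsEdgeCover E' → ∃ M ⊆ E', IsPerfectMatching M

variable {G}

theorem Adj.exists_adj_ne_of_degree_ne_one {a b : V} [Fintype (G.neighborSet a)]
    (hab : G.Adj a b) (ha : G.degree a ≠ 1) : ∃ c, G.Adj a c ∧ c ≠ b := by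
  by_contra! h
  exact ha (degree_eq_one_iff_existsUnique_adj.mpr ⟨b, hab, h⟩)

theorem Preconnected.mem_of_neighborSet_subset (hG : G.Preconnected) {S : Set V} {a : V}
    (ha : a ∈ S) (hS : ∀ w ∈ S, G.neighborSet w ⊆ S) (w : V) : w ∈ S := by
  have hreach := (reachable_iff_reflTransGen a w).mp (hG a w)
  induction hreach with
  | refl => exact ha
  | tail _ hadj ih => exact hS _ ih hadj

variable [DecidableEq V] [Fintype G.edgeSet] {M : Finset (Sym2 V)}

theorem EdgeCoversHavePerfectMatchings.neighborSet_subset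
    (hG : G.EdgeCoversHavePerfectMatchings) (hMG : M ⊆ G.edgeFinset)
    (hM : IsPerfectMatching M) {a b t c : V} (hab : s(a, b) ∈ M) (htc : s(t, c) ∈ M)
    (hta : t ≠ a) (htb : t ≠ b) (hac : G.Adj a c) : G.neighborSet b ⊆ {a, t} := by
  intro d hbd
  by_contra hd
  simp only [Set.mem_insert_iff, Set.mem_singleton_iff, not_or] at hd
  obtain ⟨hda, hdt⟩ := hd
  have hadj_of_mem {x y : V} (h : s(x, y) ∈ M) : G.Adj x y := by
    simpa using hMG h
  set E' := insert s(a, c) (insert s(b, d) (M.erase s(a, b)))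
  have hE'G : E' ⊆ G.edgeFinset := by
    intro e he
    simp only [E', Finset.mem_insert, Finset.mem_erase] at he
    rcases he with rfl | rfl | ⟨-, he⟩
    · simpa using hac
    · simpa using hbd
    · exact hMG he
  obtain ⟨M', hM'E', hM'⟩ := hG E' hE'G (hM.isEdgeCover_reroute a b c d)
  have hforced_a : ∀ e ∈ E', a ∈ e → e = s(a, c) := by
    intro e he hae
    simp only [E', Finset.mem_insert, Finset.mem_erase] at he
    rcases he with rfl | rfl | ⟨hne, he⟩
    · rfl
    · rcases Sym2.mem_iff.mp hae with rfl | rfl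
      · exact absurd rfl (hadj_of_mem hab).ne
      · exact absurd rfl hda
    · exact absurd (hM.eq_of_mem_of_mem he hab hae (Sym2.mem_mk_left a b)) hne
  have hforced_t : ∀ e ∈ E', t ∈ e → e = s(t, c) := by
    intro e he hte
    simp only [E', Finset.mem_insert, Finset.mem_erase] at he
    rcases he with rfl | rfl | ⟨-, he⟩
    · rcases Sym2.mem_iff.mp hte with rfl | rfl
      · exact absurd rfl hta
      · exact absurd rfl (hadj_of_mem htc).ne
    · rcases Sym2.mem_iff.mp hte with rfl | rfl
      · exact absurd rfl htb
      · exact absurd rfl hdt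
    · exact hM.eq_of_mem_of_mem he htc hte (Sym2.mem_mk_left t c)
  have hac_eq_tc := hM'.eq_of_mem_of_mem (hM'.mem_of_forall_eq hM'E' hforced_a)
    (hM'.mem_of_forall_eq hM'E' hforced_t) (Sym2.mem_mk_right a c) (Sym2.mem_mk_right t c)
  rcases Sym2.eq_iff.mp hac_eq_tc with ⟨hat, -⟩ | ⟨hat, -⟩
  · exact hta hat.symm
  · exact hac.ne hat

theorem EdgeCoversHavePerfectMatchings.neighborSet_subset_of_square
    (hG : G.EdgeCoversHavePerfectMatchings) (hMG : M ⊆ G.edgeFinset)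
    (hM : IsPerfectMatching M) {u v x z : V} (huv : s(u, v) ∈ M) (hzx : s(z, x) ∈ M)
    (hvz : G.Adj v z) (hux : G.Adj u x) (hzu : z ≠ u) (hxu : x ≠ u) (hxv : x ≠ v) :
    ∀ w ∈ ({u, v, x, z} : Set V), G.neighborSet w ⊆ {u, v, x, z} := by
  have hvu : s(v, u) ∈ M := Sym2.eq_swap ▸ huv
  have hxz : s(x, z) ∈ M := Sym2.eq_swap ▸ hzx
  have hNu := hG.neighborSet_subset hMG hM hvu hxz hxv hxu hvz
  have hNv := hG.neighborSet_subset hMG hM huv hzx hzu hvz.ne' hux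
  have hNx := hG.neighborSet_subset hMG hM hzx huv hzu.symm hxu.symm hvz.symm
  have hNz := hG.neighborSet_subset hMG hM hxz hvu hxv.symm hvz.ne hux.symm
  rintro w (rfl | rfl | rfl | rfl) y hy
  · rcases hNu hy with rfl | rfl <;> simp
  · rcases hNv hy with rfl | rfl <;> simp
  · rcases hNx hy with rfl | rfl <;> simp
  · rcases hNz hy with rfl | rfl <;> simp

end SimpleGraph

/-- Let `q ≥ 3`, `n = 2q`. In any connected graph `G` on `n` vertices such that
every edge subset covering all vertices contains a perfect matching, for every
perfect matching `M` of `G` and every edge `s(u,v) ∈ M`, one of `u`, `v` has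
degree `1` in `G`. -/
theorem stmt19 (q n : ℕ) (hq : 3 ≤ q) (hn : n = 2 * q)
    (G : SimpleGraph (Fin n)) [DecidableRel G.Adj]
    (hconn : G.Connected)
    (hPM : ∀ E' ⊆ G.edgeFinset, (∀ v : Fin n, ∃ e ∈ E', v ∈ e) →
      ∃ M ⊆ E', ∀ v : Fin n, ∃! e, e ∈ M ∧ v ∈ e)
    (M : Finset (Sym2 (Fin n))) (hM : M ⊆ G.edgeFinset)
    (hMpm : ∀ v : Fin n, ∃! e, e ∈ M ∧ v ∈ e)
    (u v : Fin n) (huv : s(u, v) ∈ M) :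
    G.degree u = 1 ∨ G.degree v = 1 := by
  by_contra! hdeg
  obtain ⟨hdu, hdv⟩ := hdeg
  have hG : G.EdgeCoversHavePerfectMatchings := hPM
  replace hMpm : IsPerfectMatching M := hMpm
  have huv_adj : G.Adj u v := by simpa using hM huv
  obtain ⟨z, hvz, hzu⟩ := huv_adj.symm.exists_adj_ne_of_degree_ne_one hdv
  obtain ⟨x, hzx⟩ := hMpm.exists_mem z
  have hx : x ∉ s(u, v) := hMpm.notMem_of_notMem_partner huv hzx (by simp [hzu, hvz.ne'])
  simp only [Sym2.mem_iff, not_or] at hx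
  have hux : G.Adj u x := by
    have hNu := hG.neighborSet_subset hM hMpm (Sym2.eq_swap ▸ huv) (Sym2.eq_swap ▸ hzx)
      hx.2 hx.1 hvz
    obtain ⟨y, huy, hyv⟩ := huv_adj.exists_adj_ne_of_degree_ne_one hdu
    obtain rfl : y = x := (hNu huy).resolve_left hyv
    exact huy
  have hS : ∀ w, w ∈ ({u, v, x, z} : Set (Fin n)) :=
    hconn.preconnected.mem_of_neighborSet_subset (Set.mem_insert u _)
      (hG.neighborSet_subset_of_square hM hMpm huv hzx hvz hux hzu hx.1 hx.2)
  have hcard : n ≤ 4 := calc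
    n = (Finset.univ : Finset (Fin n)).card := (Finset.card_fin n).symm
    _ ≤ ({u, v, x, z} : Finset (Fin n)).card :=
      Finset.card_le_card fun w _ ↦ by simpa using hS w
    _ ≤ 4 := Finset.card_le_four
  omega
end
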